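/- arXiv:1409.5834 — 4 statements merged into one kernel-verified Lean document; each statement's English description precedes it below -/
import Mathlib

section
/- Let Ŷ ∈ {−1,+1}^V maximize Σ_{uv∈E} X_uv·Y_u·Y_v over all Y ∈ {−1,+1}^V on the n×n grid graph, let B = {v ∈ V : Ŷ_v ≠ y_v}, and suppose no connected component of G[B] is of type 6. Then for every connected component B_i of G[B], every filled-in set F(B_i) is bad, i.e. at least half of the edges of δ(F(B_i)) satisfy X_e ≠ y_u·y_v. -/
open Finset

def IsSign (x : ℤ) : Prop := x = 1 ∨ x = -1

def gridGraph (n : ℕ) : SimpleGraph (Fin n × Fin n) where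
  Adj u v := (u.1 = v.1 ∧ Nat.dist u.2.val v.2.val = 1) ∨
    (u.2 = v.2 ∧ Nat.dist u.1.val v.1.val = 1)
  symm := by
    constructor
    intro u v h
    rcases h with ⟨h1, h2⟩ | ⟨h1, h2⟩
    · exact Or.inl ⟨h1.symm, by rwa [Nat.dist_comm]⟩
    · exact Or.inr ⟨h1.symm, by rwa [Nat.dist_comm]⟩
  loopless := by
    constructor
    intro u h
    rcases h with ⟨_, h2⟩ | ⟨_, h2⟩ <;> simp [Nat.dist_self] at h2

instance (n : ℕ) : DecidableRel (gridGraph n).Adj := fun u v =>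
  inferInstanceAs (Decidable ((u.1 = v.1 ∧ Nat.dist u.2.val v.2.val = 1) ∨
    (u.2 = v.2 ∧ Nat.dist u.1.val v.1.val = 1)))

def pairProd {V : Type*} (y : V → ℤ) : Sym2 V → ℤ :=
  Sym2.lift ⟨fun u v => y u * y v, fun u v => mul_comm (y u) (y v)⟩

/-- The boundary `δ(S)`: edges of `G` with exactly one endpoint in `S`. -/
def bdry {V : Type*} [Fintype V] [DecidableEq V] (G : SimpleGraph V) [DecidableRel G.Adj]
    (S : Finset V) : Finset (Sym2 V) :=
  G.edgeFinset.filter fun e => ∃ u v : V, e = s(u, v) ∧ u ∈ S ∧ v ∉ S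

def Maximizes {V : Type*} [Fintype V] [DecidableEq V] (G : SimpleGraph V)
    [DecidableRel G.Adj] (X : Sym2 V → ℤ) (Yh : V → ℤ) : Prop :=
  (∀ v, IsSign (Yh v)) ∧
  ∀ Y : V → ℤ, (∀ v, IsSign (Y v)) →
    (∑ e ∈ G.edgeFinset, X e * pairProd Y e) ≤ ∑ e ∈ G.edgeFinset, X e * pairProd Yh e

def Type6 (n : ℕ) (S : Finset (Fin n × Fin n)) : Prop :=
  (∃ v ∈ S, v.1.val = 0) ∧ (∃ v ∈ S, v.1.val = n - 1) ∧
  (∃ v ∈ S, v.2.val = 0) ∧ (∃ v ∈ S, v.2.val = n - 1)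

def sideCount (n : ℕ) (S : Finset (Fin n × Fin n)) : ℕ :=
  (if ∃ v ∈ S, v.1.val = 0 then 1 else 0) + (if ∃ v ∈ S, v.1.val = n - 1 then 1 else 0) +
  (if ∃ v ∈ S, v.2.val = 0 then 1 else 0) + (if ∃ v ∈ S, v.2.val = n - 1 then 1 else 0)

def ThreeSided (n : ℕ) (S : Finset (Fin n × Fin n)) : Prop := 3 ≤ sideCount n S

def IsCompOf {V : Type*} [Fintype V] [DecidableEq V] (G : SimpleGraph V)
    (C W : Finset V) : Prop :=
  C ⊆ W ∧ (G.induce (C : Set V)).Connected ∧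
  ∀ u ∈ C, ∀ v ∈ W, G.Adj u v → v ∈ C

def IsFilledIn (n : ℕ) (S F : Finset (Fin n × Fin n)) : Prop :=
  ∃ C, IsCompOf (gridGraph n) C Sᶜ ∧ ThreeSided n C ∧ F = S ∪ (Sᶜ \ C)

/-
Flipping the labels of `Ŷ` on a set `F` changes the objective by exactly
`-2 ∑_{e ∈ δ(F)} X_e Ŷ_u Ŷ_v`, so maximality of `Ŷ` forces this boundary sum to be nonnegative.
For a filled-in set `F` of a component of the mislabeled set `B`, every boundary edge leaves `B`
(its outer endpoint lies in the removed component of the complement, which avoids `B`), so on it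
`Ŷ_u Ŷ_v = -y_u y_v`. Hence `∑_{e ∈ δ(F)} X_e y_u y_v ≤ 0`, and since the summands are `±1`,
at least half of them are `-1`, i.e. bad.
-/

theorem IsSign.mul {a b : ℤ} (ha : IsSign a) (hb : IsSign b) : IsSign (a * b) := by
  rcases ha with rfl | rfl <;> rcases hb with rfl | rfl <;> norm_num [IsSign]

theorem IsSign.eq_neg_of_ne {a b : ℤ} (ha : IsSign a) (hb : IsSign b) (h : a ≠ b) : a = -b := by
  rcases ha with rfl | rfl <;> rcases hb with rfl | rfl <;> simp_all

theorem IsSign.mul_eq_neg_one_iff {a b : ℤ} (ha : IsSign a) (hb : IsSign b) :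
    a * b = -1 ↔ a ≠ b := by
  rcases ha with rfl | rfl <;> rcases hb with rfl | rfl <;> norm_num

theorem card_le_two_mul_card_filter_eq_neg_one {α : Type*} (T : Finset α) (f : α → ℤ)
    (hf : ∀ e ∈ T, IsSign (f e)) (hsum : ∑ e ∈ T, f e ≤ 0) :
    #T ≤ 2 * #(T.filter fun e => f e = -1) := by
  have hsplit : (#T : ℤ) = 2 * #(T.filter fun e => f e = -1) + ∑ e ∈ T, f e := by
    rw [card_eq_sum_ones, card_filter, Nat.cast_sum, Nat.cast_sum, mul_sum,
      ← sum_add_distrib]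
    refine sum_congr rfl fun e he => ?_
    rcases hf e he with h | h <;> simp [h]
  omega

section SignFlip

variable {V : Type*}

theorem isSign_pairProd {y : V → ℤ} (hy : ∀ v, IsSign (y v)) (e : Sym2 V) :
    IsSign (pairProd y e) := by
  induction e using Sym2.ind with
  | _ u v => exact (hy u).mul (hy v)

theorem pairProd_mk_eq_neg_of_ne_of_eq {Y y : V → ℤ} {u v : V} (hYu : IsSign (Y u))
    (hyu : IsSign (y u)) (hu : Y u ≠ y u) (hv : Y v = y v) :
    pairProd Y s(u, v) = -pairProd y s(u, v) := by
  simp [pairProd, hYu.eq_neg_of_ne hyu hu, hv]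

variable [DecidableEq V]

def flipSigns (F : Finset V) (Y : V → ℤ) : V → ℤ :=
  fun w => if w ∈ F then -Y w else Y w

theorem isSign_flipSigns {Y : V → ℤ} (hY : ∀ v, IsSign (Y v)) (F : Finset V) (v : V) :
    IsSign (flipSigns F Y v) := by
  unfold flipSigns
  split_ifs
  · rcases hY v with h | h <;> simp [h, IsSign]
  · exact hY v

theorem exists_mk_eq_mem_not_mem_iff (S : Finset V) (u v : V) :
    (∃ a b : V, s(u, v) = s(a, b) ∧ a ∈ S ∧ b ∉ S) ↔ (u ∈ S ↔ v ∉ S) := by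
  constructor
  · rintro ⟨a, b, hab, ha, hb⟩
    rcases Sym2.eq_iff.mp hab with ⟨rfl, rfl⟩ | ⟨rfl, rfl⟩ <;> tauto
  · intro h
    by_cases hu : u ∈ S
    · exact ⟨u, v, rfl, hu, h.mp hu⟩
    · exact ⟨v, u, Sym2.eq_swap, by tauto, hu⟩

theorem pairProd_flipSigns_mk (F : Finset V) (Y : V → ℤ) (u v : V) :
    pairProd (flipSigns F Y) s(u, v) =
      if (u ∈ F ↔ v ∉ F) then -pairProd Y s(u, v) else pairProd Y s(u, v) := by
  unfold pairProd flipSigns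
  by_cases hu : u ∈ F <;> by_cases hv : v ∈ F <;> simp [hu, hv]

variable [Fintype V] {G : SimpleGraph V}

theorem IsCompOf.mem_and_not_mem_of_adj_of_mem_fill {B S C : Finset V} (hS : IsCompOf G S B)
    (hC : IsCompOf G C Sᶜ) {u v : V} (hadj : G.Adj u v) (hu : u ∈ S ∪ (Sᶜ \ C))
    (hv : v ∉ S ∪ (Sᶜ \ C)) : u ∈ B ∧ v ∉ B := by
  simp only [mem_union, mem_sdiff, mem_compl, not_or, not_and,
    not_not] at hu hv
  obtain ⟨hvS, hvC⟩ := hv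
  have huS : u ∈ S := by
    rcases hu with hu | ⟨huS, huC⟩
    · exact hu
    · exact absurd (hC.2.2 v (hvC hvS) u (mem_compl.mpr huS) hadj.symm) huC
  exact ⟨hS.1 huS, fun hvB => hvS (hS.2.2 u huS v hvB hadj)⟩

variable [DecidableRel G.Adj]

theorem sum_mul_pairProd_sub_flipSigns (Y : V → ℤ) (X : Sym2 V → ℤ) (F : Finset V) :
    ∑ e ∈ G.edgeFinset, X e * pairProd Y e -
        ∑ e ∈ G.edgeFinset, X e * pairProd (flipSigns F Y) e =
      2 * ∑ e ∈ bdry G F, X e * pairProd Y e := by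
  rw [bdry, sum_filter, mul_sum, ← sum_sub_distrib]
  refine sum_congr rfl fun e _ => ?_
  induction e using Sym2.ind with
  | _ u v =>
    simp only [exists_mk_eq_mem_not_mem_iff, pairProd_flipSigns_mk]
    split_ifs <;> ring

theorem Maximizes.sum_bdry_nonneg {X : Sym2 V → ℤ} {Yh : V → ℤ} (hmax : Maximizes G X Yh)
    (F : Finset V) :
    0 ≤ ∑ e ∈ bdry G F, X e * pairProd Yh e := by
  have hle := hmax.2 _ (isSign_flipSigns hmax.1 F)
  have hdiff := sum_mul_pairProd_sub_flipSigns (G := G) Yh X F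
  linarith

end SignFlip

theorem filledIn_of_mislabeled_component_is_bad_general (n : ℕ)
    (y : Fin n × Fin n → ℤ) (hy : ∀ v, IsSign (y v))
    (X : Sym2 (Fin n × Fin n) → ℤ) (hX : ∀ e ∈ (gridGraph n).edgeFinset, IsSign (X e))
    (Yh : Fin n × Fin n → ℤ) (hmax : Maximizes (gridGraph n) X Yh)
    (B : Finset (Fin n × Fin n)) (hB : B = univ.filter fun v => Yh v ≠ y v) :
    ∀ Bi, IsCompOf (gridGraph n) Bi B →
    ∀ F, IsFilledIn n Bi F →
      (bdry (gridGraph n) F).card ≤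
        2 * ((bdry (gridGraph n) F).filter fun e => X e ≠ pairProd y e).card := by
  rintro Bi hBi F ⟨C, hC, -, hF⟩
  subst hB
  have hsigns : ∀ e ∈ bdry (gridGraph n) F, IsSign (X e) ∧ IsSign (pairProd y e) :=
    fun e he => ⟨hX e (Finset.mem_filter.mp he).1, isSign_pairProd hy e⟩
  have hflip : ∀ e ∈ bdry (gridGraph n) F, X e * pairProd Yh e = -(X e * pairProd y e) := by
    intro e he
    obtain ⟨heE, u, v, rfl, hu, hv⟩ := Finset.mem_filter.mp he
    obtain ⟨huB, hvB⟩ := hBi.mem_and_not_mem_of_adj_of_mem_fill hC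
      (SimpleGraph.mem_edgeFinset.mp heE) (hF ▸ hu) (hF ▸ hv)
    simp only [mem_filter, mem_univ, true_and, not_not] at huB hvB
    rw [pairProd_mk_eq_neg_of_ne_of_eq (hmax.1 u) (hy u) huB hvB, mul_neg]
  have hsum : ∑ e ∈ bdry (gridGraph n) F, X e * pairProd y e ≤ 0 := by
    have := hmax.sum_bdry_nonneg F
    rw [sum_congr rfl hflip, sum_neg_distrib] at this
    linarith
  calc _ ≤ 2 * ((bdry (gridGraph n) F).filter fun e => X e * pairProd y e = -1).card :=
        card_le_two_mul_card_filter_eq_neg_one _ _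
          (fun e he => (hsigns e he).1.mul (hsigns e he).2) hsum
    _ = _ := by
      congr 2
      exact filter_congr fun e he => (hsigns e he).1.mul_eq_neg_one_iff (hsigns e he).2

/-- if `Ŷ` maximizes the edge agreement on the `n × n` grid, `B` is the set
of mislabeled vertices, and no connected component of `G[B]` is of type 6, then for every
connected component `Bᵢ` of `G[B]`, every filled-in set `F(Bᵢ)` is bad: at least half of
the edges of `δ(F(Bᵢ))` are inconsistent with the ground truth. -/
theorem filledIn_of_mislabeled_component_is_bad (n : ℕ)
    (y : Fin n × Fin n → ℤ) (hy : ∀ v, IsSign (y v))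
    (X : Sym2 (Fin n × Fin n) → ℤ) (hX : ∀ e ∈ (gridGraph n).edgeFinset, IsSign (X e))
    (Yh : Fin n × Fin n → ℤ) (hmax : Maximizes (gridGraph n) X Yh)
    (B : Finset (Fin n × Fin n)) (hB : B = univ.filter fun v => Yh v ≠ y v)
    (hno6 : ∀ C, IsCompOf (gridGraph n) C B → ¬ Type6 n C) :
    ∀ Bi, IsCompOf (gridGraph n) Bi B →
    ∀ F, IsFilledIn n Bi F →
      (bdry (gridGraph n) F).card ≤
        2 * ((bdry (gridGraph n) F).filter fun e => X e ≠ pairProd y e).card :=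
  filledIn_of_mislabeled_component_is_bad_general n y hy X hX Yh hmax B hB
end

section
/- Let F ⊆ V be a nonempty subset of the n×n grid graph such that G[F] is connected, G[V∖F] is connected and nonempty, and F contains no vertex of the grid perimeter. Then |F| ≤ |δ(F)|² / 16. -/
open Finset

/-!
Let `A` and `B` be the projections of `F` to the two axes, so that `|F| ≤ |A| |B|`. As `F` avoids
the perimeter, the last cell of `F` in either direction along a column `x ∈ A` has its next
neighbour outside `F`; this gives two cut edges per column and, likewise, two per row `y ∈ B`,
all distinct. Hence `|δ(F)| ≥ 2 (|A| + |B|)`, and AM-GM gives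
`16 |F| ≤ 4 (4 |A| |B|) ≤ 4 (|A| + |B|)² ≤ |δ(F)|²`.
-/

theorem card_interedges_compl_le_card_bdry {V : Type*} [Fintype V] [DecidableEq V]
    (G : SimpleGraph V) [DecidableRel G.Adj] (S : Finset V) :
    #(G.interedges S Sᶜ) ≤ #(bdry G S) := by
  refine card_le_card_of_injOn (fun p => s(p.1, p.2)) (fun p hp => ?_) fun p hp q hq hpq => ?_
  · obtain ⟨hp₁, hp₂, hadj⟩ := G.mem_interedges_iff.1 hp
    exact mem_filter.2 ⟨G.mem_edgeFinset.2 hadj, p.1, p.2, rfl, hp₁, mem_compl.1 hp₂⟩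
  · obtain ⟨hp₁, hp₂, -⟩ := G.mem_interedges_iff.1 hp
    obtain ⟨hq₁, hq₂, -⟩ := G.mem_interedges_iff.1 hq
    rcases Sym2.eq_iff.1 hpq with ⟨h₁, h₂⟩ | ⟨h₁, -⟩
    · exact Prod.ext h₁ h₂
    · exact absurd (h₁ ▸ hp₁) (mem_compl.1 hq₂)

namespace Fin

theorem exists_mem_notMem_succ {n : ℕ} {S : Finset (Fin n)} (hS : S.Nonempty)
    (hlast : ∀ t ∈ S, t.val ≠ n - 1) : ∃ t ∈ S, ∃ t' ∉ S, t'.val = t.val + 1 := by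
  have hlt : (S.max' hS).val + 1 < n := by
    have := hlast _ (S.max'_mem hS); omega
  refine ⟨S.max' hS, S.max'_mem hS, ⟨_, hlt⟩, fun h => ?_, rfl⟩
  have := S.le_max' _ h
  simp [Fin.le_def] at this

theorem exists_mem_notMem_pred {n : ℕ} {S : Finset (Fin n)} (hS : S.Nonempty)
    (hfirst : ∀ t ∈ S, t.val ≠ 0) : ∃ t ∈ S, ∃ t' ∉ S, t.val = t'.val + 1 := by
  have hpos := hfirst _ (S.min'_mem hS)
  refine ⟨S.min' hS, S.min'_mem hS, ⟨(S.min' hS).val - 1, by omega⟩, fun h => ?_,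
    by dsimp only; omega⟩
  have := S.min'_le _ h
  rw [Fin.le_def] at this
  dsimp only at this
  omega

end Fin

namespace gridGraph

theorem adj_of_fst_eq {n : ℕ} {u v : Fin n × Fin n} (h₁ : u.1 = v.1)
    (h₂ : u.2.val + 1 = v.2.val ∨ v.2.val + 1 = u.2.val) : (gridGraph n).Adj u v :=
  Or.inl ⟨h₁, by unfold Nat.dist; omega⟩

theorem adj_of_snd_eq {n : ℕ} {u v : Fin n × Fin n} (h₂ : u.2 = v.2)
    (h₁ : u.1.val + 1 = v.1.val ∨ v.1.val + 1 = u.1.val) : (gridGraph n).Adj u v :=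
  Or.inr ⟨h₂, by unfold Nat.dist; omega⟩

variable {n : ℕ} {F : Finset (Fin n × Fin n)}

theorem exists_mem_interedges_fst_eq
    (hper : ∀ v ∈ F, v.2.val ≠ 0 ∧ v.2.val ≠ n - 1) {x : Fin n} (hx : x ∈ F.image Prod.fst)
    (b : Bool) : ∃ p ∈ (gridGraph n).interedges F Fᶜ,
      p.1.1 = x ∧ p.2.1 = x ∧ decide (p.1.2 < p.2.2) = b := by
  obtain ⟨v, hv, rfl⟩ := mem_image.1 hx
  have hcol : ({y | (v.1, y) ∈ F} : Finset (Fin n)).Nonempty := ⟨v.2, by simpa using hv⟩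
  have hline : ∀ y ∈ ({y | (v.1, y) ∈ F} : Finset (Fin n)), (v.1, y) ∈ F := by simp
  cases b
  · obtain ⟨t, ht, t', ht', hval⟩ :=
      Fin.exists_mem_notMem_pred hcol fun t ht => (hper _ (hline t ht)).1
    refine ⟨((v.1, t), (v.1, t')), (gridGraph n).mk_mem_interedges_iff.2
      ⟨hline t ht, by simpa using ht', adj_of_fst_eq rfl (Or.inr hval.symm)⟩, rfl, rfl, ?_⟩
    simp only [decide_eq_false_iff_not, not_lt]; omega
  · obtain ⟨t, ht, t', ht', hval⟩ :=
      Fin.exists_mem_notMem_succ hcol fun t ht => (hper _ (hline t ht)).2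
    refine ⟨((v.1, t), (v.1, t')), (gridGraph n).mk_mem_interedges_iff.2
      ⟨hline t ht, by simpa using ht', adj_of_fst_eq rfl (Or.inl hval.symm)⟩, rfl, rfl, ?_⟩
    simp only [decide_eq_true_eq]; omega

theorem exists_mem_interedges_snd_eq
    (hper : ∀ v ∈ F, v.1.val ≠ 0 ∧ v.1.val ≠ n - 1) {y : Fin n} (hy : y ∈ F.image Prod.snd)
    (b : Bool) : ∃ p ∈ (gridGraph n).interedges F Fᶜ,
      p.1.2 = y ∧ p.2.2 = y ∧ decide (p.1.1 < p.2.1) = b := by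
  obtain ⟨v, hv, rfl⟩ := mem_image.1 hy
  have hrow : ({x | (x, v.2) ∈ F} : Finset (Fin n)).Nonempty := ⟨v.1, by simpa using hv⟩
  have hline : ∀ x ∈ ({x | (x, v.2) ∈ F} : Finset (Fin n)), (x, v.2) ∈ F := by simp
  cases b
  · obtain ⟨t, ht, t', ht', hval⟩ :=
      Fin.exists_mem_notMem_pred hrow fun t ht => (hper _ (hline t ht)).1
    refine ⟨((t, v.2), (t', v.2)), (gridGraph n).mk_mem_interedges_iff.2
      ⟨hline t ht, by simpa using ht', adj_of_snd_eq rfl (Or.inr hval.symm)⟩, rfl, rfl, ?_⟩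
    simp only [decide_eq_false_iff_not, not_lt]; omega
  · obtain ⟨t, ht, t', ht', hval⟩ :=
      Fin.exists_mem_notMem_succ hrow fun t ht => (hper _ (hline t ht)).2
    refine ⟨((t, v.2), (t', v.2)), (gridGraph n).mk_mem_interedges_iff.2
      ⟨hline t ht, by simpa using ht', adj_of_snd_eq rfl (Or.inl hval.symm)⟩, rfl, rfl, ?_⟩
    simp only [decide_eq_true_eq]; omega

theorem two_mul_card_image_fst_add_card_image_snd_le_card_interedges
    (hper : ∀ v ∈ F, v.1.val ≠ 0 ∧ v.1.val ≠ n - 1 ∧ v.2.val ≠ 0 ∧ v.2.val ≠ n - 1) :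
    2 * (#(F.image Prod.fst) + #(F.image Prod.snd)) ≤ #((gridGraph n).interedges F Fᶜ) := by
  let side : (Fin n × Fin n) × (Fin n × Fin n) → (Fin n × Bool) ⊕ (Fin n × Bool) := fun p =>
    if p.1.1 = p.2.1 then .inl (p.1.1, decide (p.1.2 < p.2.2))
    else .inr (p.1.2, decide (p.1.1 < p.2.1))
  have hsurj : Set.SurjOn side ((gridGraph n).interedges F Fᶜ)
      ((F.image Prod.fst ×ˢ univ).disjSum (F.image Prod.snd ×ˢ univ) :
        Finset ((Fin n × Bool) ⊕ (Fin n × Bool))) := by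
    rintro (⟨x, b⟩ | ⟨y, b⟩) hxy <;>
      simp only [mem_coe, inl_mem_disjSum, inr_mem_disjSum, mem_product, mem_univ, and_true]
        at hxy
    · obtain ⟨p, hp, h₁, h₂, hb⟩ :=
        exists_mem_interedges_fst_eq (fun v hv => (hper v hv).2.2) hxy b
      exact ⟨p, hp, by simp [side, h₁, h₂, hb]⟩
    · obtain ⟨p, hp, h₁, h₂, hb⟩ :=
        exists_mem_interedges_snd_eq (fun v hv => ⟨(hper v hv).1, (hper v hv).2.1⟩) hxy b
      have hne : p.1.1 ≠ p.2.1 := fun h => ((gridGraph n).ne_of_adj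
        ((gridGraph n).mem_interedges_iff.1 hp).2.2) (Prod.ext h (h₁.trans h₂.symm))
      exact ⟨p, hp, by simp [side, h₁, hne, hb]⟩
  calc 2 * (#(F.image Prod.fst) + #(F.image Prod.snd))
      = #((F.image Prod.fst ×ˢ univ).disjSum (F.image Prod.snd ×ˢ univ)) := by
        simp only [card_disjSum, card_product, card_univ, Fintype.card_bool]; ring
    _ ≤ _ := card_le_card_of_surjOn side hsurj

end gridGraph

theorem type1_area_le_boundary_sq_div16_general (n : ℕ) (F : Finset (Fin n × Fin n))
    (hper : ∀ v ∈ F, v.1.val ≠ 0 ∧ v.1.val ≠ n - 1 ∧ v.2.val ≠ 0 ∧ v.2.val ≠ n - 1) :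
    16 * F.card ≤ (bdry (gridGraph n) F).card ^ 2 := by
  set a := #(F.image Prod.fst)
  set b := #(F.image Prod.snd)
  have harea : #F ≤ a * b := (card_le_card subset_product).trans (card_product _ _).le
  have hcut : 2 * (a + b) ≤ #(bdry (gridGraph n) F) :=
    (gridGraph.two_mul_card_image_fst_add_card_image_snd_le_card_interedges hper).trans
      (card_interedges_compl_le_card_bdry _ F)
  calc 16 * #F ≤ 16 * (a * b) := by gcongr
    _ = 4 * (4 * a * b) := by ring
    _ ≤ 4 * (a + b) ^ 2 := by gcongr; exact four_mul_le_sq_add a b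
    _ = (2 * (a + b)) ^ 2 := by ring
    _ ≤ #(bdry (gridGraph n) F) ^ 2 := by gcongr

/-- a nonempty set `F` with `G[F]` connected, `G[V∖F]` connected and
nonempty, containing no perimeter vertex, satisfies `|F| ≤ |δ(F)|²/16`. -/
theorem type1_area_le_boundary_sq_div16 (n : ℕ) (F : Finset (Fin n × Fin n))
    (hne : F.Nonempty)
    (hconn : ((gridGraph n).induce (F : Set (Fin n × Fin n))).Connected)
    (hconnc : ((gridGraph n).induce ((↑F : Set (Fin n × Fin n))ᶜ)).Connected)
    (hcne : Fᶜ.Nonempty)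
    (hper : ∀ v ∈ F, v.1.val ≠ 0 ∧ v.1.val ≠ n - 1 ∧ v.2.val ≠ 0 ∧ v.2.val ≠ n - 1) :
    16 * F.card ≤ (bdry (gridGraph n) F).card ^ 2 :=
  type1_area_le_boundary_sq_div16_general n F hper
end

section
/- Let F ⊆ V be a nonempty subset of the n×n grid graph such that G[F] is connected, G[V∖F] is connected and nonempty, and F is not of type 6 (it does not contain vertices from all four sides of the grid perimeter). Then |F| ≤ |δ(F)|². -/
open Finset

/-!
If `F` misses one side of the grid, say the column `x = 0`, then no row lies inside `F`, so every
row that meets `F` is cut by `F` somewhere and contributes a horizontal boundary edge: the number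
of rows meeting `F` is at most `|δ(F)|`. The columns meeting `F` are counted the same way by
vertical boundary edges, unless some column lies entirely in `F`; but then `F` meets every row,
and there are no more columns than rows. Hence `|F| ≤ #columns · #rows ≤ |δ(F)|²`.
-/

namespace SimpleGraph

variable {V W α β : Type*}

theorem Preconnected.exists_adj_mem_not_mem {G : SimpleGraph V} (hG : G.Preconnected)
    {S : Set V} {u v : V} (hu : u ∈ S) (hv : v ∉ S) :
    ∃ x y, G.Adj x y ∧ x ∈ S ∧ y ∉ S := by
  obtain ⟨d, -, hd⟩ := (hG u v).some.exists_boundary_dart S hu hv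
  exact ⟨d.fst, d.snd, d.adj, hd⟩

section Boundary

variable [Fintype V] [DecidableEq V] [Fintype W] [DecidableEq W]

theorem mem_bdry {G : SimpleGraph V} [DecidableRel G.Adj] {S : Finset V} {e : Sym2 V} :
    e ∈ bdry G S ↔ ∃ u v, G.Adj u v ∧ e = s(u, v) ∧ u ∈ S ∧ v ∉ S := by
  simp only [bdry, mem_filter, mem_edgeFinset]
  constructor
  · rintro ⟨he, u, v, rfl, hu, hv⟩
    exact ⟨u, v, he, rfl, hu, hv⟩
  · rintro ⟨u, v, huv, rfl, hu, hv⟩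
    exact ⟨huv, u, v, rfl, hu, hv⟩

theorem Iso.map_mem_bdry {G : SimpleGraph V} {G' : SimpleGraph W} [DecidableRel G.Adj]
    [DecidableRel G'.Adj] (φ : G ≃g G') {S : Finset V} {e : Sym2 V} (he : e ∈ bdry G S) :
    Sym2.map φ e ∈ bdry G' (S.image φ) := by
  obtain ⟨u, v, huv, rfl, hu, hv⟩ := mem_bdry.1 he
  exact mem_bdry.2 ⟨φ u, φ v, φ.map_adj_iff.2 huv, Sym2.map_mk _ _ _,
    mem_image_of_mem _ hu, by simpa using hv⟩

theorem Iso.card_bdry_map {G : SimpleGraph V} {G' : SimpleGraph W} [DecidableRel G.Adj]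
    [DecidableRel G'.Adj] (φ : G ≃g G') (S : Finset V) :
    #(bdry G' (S.image φ)) = #(bdry G S) := by
  refine card_nbij' (Sym2.map φ.symm) (Sym2.map φ) (fun e he => ?_)
    (fun e he => φ.map_mem_bdry he)
    (fun e _ => by simp [Sym2.map_map]) (fun e _ => by simp [Sym2.map_map])
  simpa [image_image] using φ.symm.map_mem_bdry he

end Boundary

section BoxProd

variable [Fintype α] [DecidableEq α] [Fintype β] [DecidableEq β]
  {G : SimpleGraph α} {H : SimpleGraph β}

theorem card_image_snd_le_card_bdry_boxProd [DecidableRel (G □ H).Adj] (hG : G.Preconnected)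
    {S : Finset (α × β)} (hS : ∀ b, ∃ a, (a, b) ∉ S) :
    #(S.image Prod.snd) ≤ #(bdry (G □ H) S) := by
  refine card_le_card_of_forall_subsingleton (fun b e => ∃ x y, e = s((x, b), (y, b)))
    (fun b hb => ?_) ?_
  · obtain ⟨⟨a, b⟩, ha, rfl⟩ := mem_image.1 hb
    obtain ⟨a', ha'⟩ := hS b
    obtain ⟨x, y, hxy, hx, hy⟩ :=
      hG.exists_adj_mem_not_mem (S := {x | (x, b) ∈ S}) (u := a) (v := a') ha ha'
    exact ⟨_, mem_bdry.2 ⟨_, _, boxProd_adj_left.2 hxy, rfl, hx, hy⟩, x, y, rfl⟩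
  · rintro e - b ⟨-, x, y, rfl⟩ b' ⟨-, x', y', he⟩
    rcases Sym2.eq_iff.1 he with ⟨h, -⟩ | ⟨h, -⟩ <;> exact congrArg Prod.snd h

theorem card_image_fst_le_card_bdry_boxProd [DecidableRel (G □ H).Adj] (hH : H.Preconnected)
    {S : Finset (α × β)} (hS : ∀ a, ∃ b, (a, b) ∉ S) :
    #(S.image Prod.fst) ≤ #(bdry (G □ H) S) := by
  classical
  let φ := boxProdComm G H
  have hφS : ∀ a, ∃ b, (b, a) ∉ S.image φ := fun a => by
    obtain ⟨b, hb⟩ := hS a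
    exact ⟨b, by simpa [φ] using hb⟩
  calc #(S.image Prod.fst) = #((S.image φ).image Prod.snd) := by
        simp [image_image, Function.comp_def, φ]
    _ ≤ #(bdry (H □ G) (S.image φ)) := card_image_snd_le_card_bdry_boxProd hH hφS
    _ = #(bdry (G □ H) S) := φ.card_bdry_map S

theorem card_le_card_bdry_boxProd_self_sq [DecidableRel (G □ G).Adj]
    (hG : G.Preconnected) {S : Finset (α × α)}
    (hS : (∀ b, ∃ a, (a, b) ∉ S) ∨ ∀ a, ∃ b, (a, b) ∉ S) :
    #S ≤ #(bdry (G □ G) S) ^ 2 := by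
  set B := #(bdry (G □ G) S)
  have hrows : #(S.image Prod.snd) ≤ B := by
    by_cases h : ∀ b, ∃ a, (a, b) ∉ S
    · exact card_image_snd_le_card_bdry_boxProd hG h
    push Not at h
    obtain ⟨b, hb⟩ := h
    have hfst : S.image Prod.fst = univ := eq_univ_of_forall fun a => mem_image_of_mem _ (hb a)
    calc #(S.image Prod.snd) ≤ #(univ : Finset α) := card_le_univ _
      _ = #(S.image Prod.fst) := by rw [hfst]
      _ ≤ B :=
        card_image_fst_le_card_bdry_boxProd hG (hS.resolve_left (by simpa using ⟨b, hb⟩))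
  have hcols : #(S.image Prod.fst) ≤ B := by
    by_cases h : ∀ a, ∃ b, (a, b) ∉ S
    · exact card_image_fst_le_card_bdry_boxProd hG h
    push Not at h
    obtain ⟨a, ha⟩ := h
    have hsnd : S.image Prod.snd = univ := eq_univ_of_forall fun b => mem_image_of_mem _ (ha b)
    calc #(S.image Prod.fst) ≤ #(univ : Finset α) := card_le_univ _
      _ = #(S.image Prod.snd) := by rw [hsnd]
      _ ≤ B :=
        card_image_snd_le_card_bdry_boxProd hG (hS.resolve_right (by simpa using ⟨a, ha⟩))
  calc #S ≤ #(S.image Prod.fst ×ˢ S.image Prod.snd) := card_le_card subset_product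
    _ = #(S.image Prod.fst) * #(S.image Prod.snd) := card_product _ _
    _ ≤ B ^ 2 := by rw [sq]; exact Nat.mul_le_mul hcols hrows

end BoxProd

end SimpleGraph

open SimpleGraph

theorem gridGraph_eq_boxProd (n : ℕ) : gridGraph n = pathGraph n □ pathGraph n := by
  ext u v
  simp only [gridGraph, boxProd_adj, pathGraph_adj, Nat.dist, Fin.ext_iff]
  omega

theorem area_le_boundary_sq_general (n : ℕ) (F : Finset (Fin n × Fin n))
    (hno6 : ¬ Type6 n F) :
    F.card ≤ (bdry (gridGraph n) F).card ^ 2 := by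
  have hside : (∀ y : Fin n, ∃ x, (x, y) ∉ F) ∨ ∀ x : Fin n, ∃ y, (x, y) ∉ F := by
    simp only [Type6, not_and_or] at hno6
    rcases hno6 with h | h | h | h
    · exact .inl fun y => ⟨⟨0, y.pos⟩, fun hy => h ⟨_, hy, rfl⟩⟩
    · exact .inl fun y =>
        ⟨⟨n - 1, Nat.sub_one_lt_of_lt y.pos⟩, fun hy => h ⟨_, hy, rfl⟩⟩
    · exact .inr fun x => ⟨⟨0, x.pos⟩, fun hx => h ⟨_, hx, rfl⟩⟩
    · exact .inr fun x =>
        ⟨⟨n - 1, Nat.sub_one_lt_of_lt x.pos⟩, fun hx => h ⟨_, hx, rfl⟩⟩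
  -- Mathlib has no decidability instance for `□`; `convert` matches the classical one with ours.
  classical
  convert card_le_card_bdry_boxProd_self_sq (pathGraph_preconnected n) hside using 4
  exact gridGraph_eq_boxProd n

/-- a nonempty set `F` with `G[F]` connected, `G[V∖F]` connected and
nonempty, and `F` not of type 6, satisfies `|F| ≤ |δ(F)|²`. -/
theorem area_le_boundary_sq (n : ℕ) (F : Finset (Fin n × Fin n))
    (hne : F.Nonempty)
    (hconn : ((gridGraph n).induce (F : Set (Fin n × Fin n))).Connected)
    (hconnc : ((gridGraph n).induce ((↑F : Set (Fin n × Fin n))ᶜ)).Connected)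
    (hcne : Fᶜ.Nonempty)
    (hno6 : ¬ Type6 n F) :
    F.card ≤ (bdry (gridGraph n) F).card ^ 2 :=
  area_le_boundary_sq_general n F hno6
end

section
/- Let F ⊆ V be a nonempty subset of the n×n grid graph such that G[F] is connected, G[V∖F] is connected and nonempty, and F contains no vertex of the grid perimeter (a type-1 set). Then |δ(F)| is even and |δ(F)| ≥ 4; in particular there is no such F with |δ(F)| odd or |δ(F)| = 2. -/
/-!
Every vertex of `F` is interior and so has degree 4; counting the pairs `(u, v)` with `u ∈ F`
adjacent to `v` gives `4 |F| = |δ(F)| + 2 e(G[F])`, so `|δ(F)|` is even. The lexicographically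
least vertex of `F` has its two lower neighbours outside `F` and the greatest has its two upper
neighbours outside `F`: if these vertices differ, that is four boundary edges, and otherwise `F`
is a single vertex, all four of whose edges lie in `δ(F)`.
-/

open Finset

section

open SimpleGraph

variable {V : Type*} [Fintype V] [DecidableEq V] (G : SimpleGraph V) [DecidableRel G.Adj]

theorem card_bdry_eq_sum (S : Finset V) :
    #(bdry G S) = ∑ u ∈ S, #(G.neighborFinset u \ S) := by
  rw [← card_sigma]
  symm
  refine card_bij (fun p _ => s(p.1, p.2)) ?_ ?_ ?_
  · rintro ⟨u, v⟩ h
    simp only [mem_sigma, mem_sdiff, mem_neighborFinset] at h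
    exact mem_filter.mpr ⟨G.mem_edgeFinset.mpr h.2.1, u, v, rfl, h.1, h.2.2⟩
  · rintro ⟨a, b⟩ hab ⟨c, d⟩ hcd h
    simp only [mem_sigma, mem_sdiff] at hab hcd
    rcases Sym2.eq_iff.mp h with ⟨rfl, rfl⟩ | ⟨rfl, rfl⟩
    · rfl
    · exact absurd hab.1 hcd.2.2
  · intro e he
    obtain ⟨he, u, v, rfl, hu, hv⟩ := mem_filter.mp he
    have huv : v ∈ G.neighborFinset u := (G.mem_neighborFinset _ _).mpr (G.mem_edgeFinset.mp he)
    exact ⟨⟨u, v⟩, mem_sigma.mpr ⟨hu, mem_sdiff.mpr ⟨huv, hv⟩⟩, rfl⟩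

theorem sum_card_neighborFinset_inter (S : Finset V) :
    ∑ u ∈ S, #(G.neighborFinset u ∩ S) = 2 * #(G.induce (S : Set V)).edgeFinset := by
  rw [← sum_degrees_eq_twice_card_edges, ← sum_coe_sort S]
  refine sum_congr rfl fun u _ => ?_
  rw [← card_neighborFinset_eq_degree, ← card_map (.subtype _)]
  congr 1
  ext v
  simp [and_comm]

theorem card_bdry_add_sum_card_neighborFinset_inter (S : Finset V) :
    #(bdry G S) + ∑ u ∈ S, #(G.neighborFinset u ∩ S) = ∑ u ∈ S, G.degree u := by
  rw [card_bdry_eq_sum, ← sum_add_distrib]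
  exact sum_congr rfl fun u _ => by rw [card_sdiff_add_card_inter, card_neighborFinset_eq_degree]

theorem card_bdry_singleton (u : V) : #(bdry G {u}) = G.degree u := by
  rw [card_bdry_eq_sum, sum_singleton, sdiff_singleton_eq_erase,
    erase_eq_of_notMem (G.notMem_neighborFinset_self u),
    card_neighborFinset_eq_degree]

theorem even_card_bdry {S : Finset V} (h : ∀ u ∈ S, Even (G.degree u)) : Even #(bdry G S) := by
  have hsum : Even (∑ u ∈ S, G.degree u) := Finset.even_sum _ h
  rw [← card_bdry_add_sum_card_neighborFinset_inter, sum_card_neighborFinset_inter] at hsum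
  exact (Nat.even_add.mp hsum).mpr (even_two_mul _)

end

namespace gridGraph

variable {n : ℕ}

theorem adj_iff {u v : Fin n × Fin n} : (gridGraph n).Adj u v ↔
    (u.1 = v.1 ∧ Nat.dist u.2.val v.2.val = 1) ∨ (u.2 = v.2 ∧ Nat.dist u.1.val v.1.val = 1) :=
  Iff.rfl

def IsInterior (v : Fin n × Fin n) : Prop :=
  v.1.val ≠ 0 ∧ v.1.val ≠ n - 1 ∧ v.2.val ≠ 0 ∧ v.2.val ≠ n - 1

theorem degree_eq_four_of_isInterior {u : Fin n × Fin n} (hu : IsInterior u) :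
    (gridGraph n).degree u = 4 := by
  obtain ⟨hx₀, hx₁, hy₀, hy₁⟩ := hu
  have hN : (gridGraph n).neighborFinset u =
      {(⟨u.1.val - 1, by omega⟩, u.2), (⟨u.1.val + 1, by omega⟩, u.2),
        (u.1, ⟨u.2.val - 1, by omega⟩), (u.1, ⟨u.2.val + 1, by omega⟩)} := by
    ext v
    have := v.1.isLt; have := v.2.isLt
    simp only [SimpleGraph.mem_neighborFinset, adj_iff, Nat.dist, mem_insert, mem_singleton,
      Prod.ext_iff, Fin.ext_iff]
    omega
  rw [← SimpleGraph.card_neighborFinset_eq_degree, hN]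
  repeat rw [card_insert_of_notMem
    (by simp only [mem_insert, mem_singleton, Prod.ext_iff, Fin.ext_iff]; omega)]
  rfl

theorem exists_adj_adj_lt {u : Fin n × Fin n} (hx : u.1.val ≠ 0) (hy : u.2.val ≠ 0) :
    ∃ a b, a ≠ b ∧ (gridGraph n).Adj u a ∧ (gridGraph n).Adj u b ∧
      toLex a < toLex u ∧ toLex b < toLex u := by
  refine ⟨(⟨u.1.val - 1, by omega⟩, u.2), (u.1, ⟨u.2.val - 1, by omega⟩),
    ?_, ?_, ?_, ?_, ?_⟩ <;>
    simp [adj_iff, Nat.dist, Prod.ext_iff, Fin.ext_iff, Prod.Lex.toLex_lt_toLex, Fin.lt_def] <;>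
    omega

theorem exists_adj_adj_gt {u : Fin n × Fin n} (hx : u.1.val ≠ n - 1) (hy : u.2.val ≠ n - 1) :
    ∃ a b, a ≠ b ∧ (gridGraph n).Adj u a ∧ (gridGraph n).Adj u b ∧
      toLex u < toLex a ∧ toLex u < toLex b := by
  refine ⟨(⟨u.1.val + 1, by omega⟩, u.2), (u.1, ⟨u.2.val + 1, by omega⟩),
    ?_, ?_, ?_, ?_, ?_⟩ <;>
    simp [adj_iff, Nat.dist, Prod.ext_iff, Fin.ext_iff, Prod.Lex.toLex_lt_toLex, Fin.lt_def]

theorem two_le_card_neighborFinset_sdiff_of_forall_le {S : Finset (Fin n × Fin n)}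
    {u : Fin n × Fin n} (hx : u.1.val ≠ 0) (hy : u.2.val ≠ 0)
    (hmin : ∀ v ∈ S, toLex u ≤ toLex v) : 2 ≤ #((gridGraph n).neighborFinset u \ S) := by
  obtain ⟨a, b, hab, ha, hb, hau, hbu⟩ := exists_adj_adj_lt hx hy
  have hout : ∀ v, toLex v < toLex u → v ∉ S := fun v hv hvS => (hmin v hvS).not_gt hv
  exact one_lt_card.mpr ⟨a, by simp [ha, hout a hau], b, by simp [hb, hout b hbu], hab⟩

theorem two_le_card_neighborFinset_sdiff_of_forall_ge {S : Finset (Fin n × Fin n)}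
    {u : Fin n × Fin n} (hx : u.1.val ≠ n - 1) (hy : u.2.val ≠ n - 1)
    (hmax : ∀ v ∈ S, toLex v ≤ toLex u) : 2 ≤ #((gridGraph n).neighborFinset u \ S) := by
  obtain ⟨a, b, hab, ha, hb, hau, hbu⟩ := exists_adj_adj_gt hx hy
  have hout : ∀ v, toLex u < toLex v → v ∉ S := fun v hv hvS => (hmax v hvS).not_gt hv
  exact one_lt_card.mpr ⟨a, by simp [ha, hout a hau], b, by simp [hb, hout b hbu], hab⟩

end gridGraph

theorem type1_boundary_even_and_ge_four_general (n : ℕ) (F : Finset (Fin n × Fin n))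
    (hne : F.Nonempty)
    (hper : ∀ v ∈ F, v.1.val ≠ 0 ∧ v.1.val ≠ n - 1 ∧ v.2.val ≠ 0 ∧ v.2.val ≠ n - 1) :
    Even (bdry (gridGraph n) F).card ∧ 4 ≤ (bdry (gridGraph n) F).card := by
  have hdeg : ∀ u ∈ F, (gridGraph n).degree u = 4 :=
    fun u hu => gridGraph.degree_eq_four_of_isInterior (hper u hu)
  refine ⟨even_card_bdry _ fun u hu => by rw [hdeg u hu]; decide, ?_⟩
  obtain ⟨u₀, hu₀, hmin⟩ := F.exists_min_image toLex hne
  obtain ⟨u₁, hu₁, hmax⟩ := F.exists_max_image toLex hne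
  rcases eq_or_ne u₀ u₁ with rfl | hu₀₁
  · have hF : F = {u₀} := eq_singleton_iff_unique_mem.mpr
      ⟨hu₀, fun v hv => toLex.injective ((hmax v hv).antisymm (hmin v hv))⟩
    rw [hF, card_bdry_singleton, hdeg u₀ hu₀]
  · obtain ⟨hx₀, -, hy₀, -⟩ := hper u₀ hu₀
    obtain ⟨-, hx₁, -, hy₁⟩ := hper u₁ hu₁
    calc 4 ≤ #((gridGraph n).neighborFinset u₀ \ F)
          + #((gridGraph n).neighborFinset u₁ \ F) :=
          add_le_add (gridGraph.two_le_card_neighborFinset_sdiff_of_forall_le hx₀ hy₀ hmin)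
            (gridGraph.two_le_card_neighborFinset_sdiff_of_forall_ge hx₁ hy₁ hmax)
      _ = ∑ u ∈ {u₀, u₁}, #((gridGraph n).neighborFinset u \ F) := by rw [sum_pair hu₀₁]
      _ ≤ ∑ u ∈ F, #((gridGraph n).neighborFinset u \ F) :=
          sum_le_sum_of_subset (insert_subset hu₀ (singleton_subset_iff.mpr hu₁))
      _ = #(bdry (gridGraph n) F) := (card_bdry_eq_sum _ F).symm

/-- for a nonempty type-1 set `F` (with `G[F]` connected, `G[V∖F]` connected
and nonempty, and `F` containing no perimeter vertex), the boundary size `|δ(F)|` is even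
and at least `4`; in particular it is neither odd nor equal to `2`. -/
theorem type1_boundary_even_and_ge_four (n : ℕ) (F : Finset (Fin n × Fin n))
    (hne : F.Nonempty)
    (hconn : ((gridGraph n).induce (F : Set (Fin n × Fin n))).Connected)
    (hconnc : ((gridGraph n).induce ((↑F : Set (Fin n × Fin n))ᶜ)).Connected)
    (hcne : Fᶜ.Nonempty)
    (hper : ∀ v ∈ F, v.1.val ≠ 0 ∧ v.1.val ≠ n - 1 ∧ v.2.val ≠ 0 ∧ v.2.val ≠ n - 1) :
    Even (bdry (gridGraph n) F).card ∧ 4 ≤ (bdry (gridGraph n) F).card :=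
  type1_boundary_even_and_ge_four_general n F hne hper
end
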